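/- arXiv:1903.09004 — 2 statements merged into one kernel-verified Lean document; each statement's English description precedes it below -/
import Mathlib

section
/- Fix $\mu\in\mathbb{R}$ and let $\eta(\xi) = \mu + \frac{1}{\sqrt2}\frac{1}{\sqrt{3\mu^2+1}}(\xi-\mu)\sqrt{\xi^2+2\mu\xi+3\mu^2+2}$. Then $\eta$ is a strictly increasing smooth bijection of $\mathbb{R}$ onto $\mathbb{R}$ with $\eta(\mu)=\mu$ and $\eta'(\mu)=1$. -/
noncomputable def etaFun (μ ξ : ℝ) : ℝ :=
  μ + (1 / Real.sqrt 2) * (1 / Real.sqrt (3 * μ ^ 2 + 1)) * (ξ - μ) *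
    Real.sqrt (ξ ^ 2 + 2 * μ * ξ + 3 * μ ^ 2 + 2)

namespace EtaAux

noncomputable def c (μ : ℝ) : ℝ := (1 / Real.sqrt 2) * (1 / Real.sqrt (3 * μ ^ 2 + 1))

noncomputable def Q (μ ξ : ℝ) : ℝ := ξ ^ 2 + 2 * μ * ξ + 3 * μ ^ 2 + 2

lemma Q_ge (μ ξ : ℝ) : 2 ≤ Q μ ξ := by
  have : 0 ≤ (ξ + μ) ^ 2 + 2 * μ ^ 2 := by positivity
  unfold Q; nlinarith

lemma Q_pos (μ ξ : ℝ) : 0 < Q μ ξ := lt_of_lt_of_le two_pos (Q_ge μ ξ)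

lemma sqrtQ_pos (μ ξ : ℝ) : 0 < Real.sqrt (Q μ ξ) := Real.sqrt_pos.2 (Q_pos μ ξ)

lemma c_pos (μ : ℝ) : 0 < c μ := by
  have h1 : (0:ℝ) < Real.sqrt 2 := by positivity
  have h2 : (0:ℝ) < Real.sqrt (3 * μ ^ 2 + 1) := Real.sqrt_pos.2 (by positivity)
  unfold c; positivity

lemma eta_eq (μ ξ : ℝ) : etaFun μ ξ = μ + c μ * (ξ - μ) * Real.sqrt (Q μ ξ) := rfl

lemma hasDerivAt_eta (μ x : ℝ) :
    HasDerivAt (etaFun μ)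
      (c μ * (Real.sqrt (Q μ x) + (x - μ) * ((2 * x + 2 * μ) / (2 * Real.sqrt (Q μ x))))) x := by
  have hQ : HasDerivAt (fun ξ => Q μ ξ) (2 * x + 2 * μ) x := by
    unfold Q
    have : HasDerivAt (fun ξ : ℝ => ξ ^ 2 + 2 * μ * ξ + 3 * μ ^ 2 + 2)
        (2 * x ^ 1 + 2 * μ) x := by
      simpa using (((hasDerivAt_pow 2 x).add ((hasDerivAt_id x).const_mul (2 * μ))).add_const
        (3 * μ ^ 2)).add_const 2
    simpa using this
  have hs : HasDerivAt (fun ξ => Real.sqrt (Q μ ξ))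
      ((2 * x + 2 * μ) / (2 * Real.sqrt (Q μ x))) x := by
    have := (Real.hasDerivAt_sqrt (Q_pos μ x).ne').comp x hQ
    simpa [div_eq_mul_inv, mul_comm, Function.comp_def] using this
  have h1 : HasDerivAt (fun ξ => c μ * (ξ - μ)) (c μ) x := by
    simpa using ((hasDerivAt_id x).sub_const μ).const_mul (c μ)
  have := (h1.mul hs).const_add μ
  refine this.congr_deriv ?_
  ring

lemma deriv_pos (μ x : ℝ) :
    0 < c μ * (Real.sqrt (Q μ x) + (x - μ) * ((2 * x + 2 * μ) / (2 * Real.sqrt (Q μ x)))) := by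
  have hs := sqrtQ_pos μ x
  have hsq : Real.sqrt (Q μ x) ^ 2 = Q μ x := Real.sq_sqrt (Q_pos μ x).le
  have key : Real.sqrt (Q μ x) + (x - μ) * ((2 * x + 2 * μ) / (2 * Real.sqrt (Q μ x)))
      = (Q μ x + (x - μ) * (x + μ)) / Real.sqrt (Q μ x) := by
    field_simp
    nlinarith [hsq]
  rw [key]
  have hnum : 0 < Q μ x + (x - μ) * (x + μ) := by
    have h1 : 0 ≤ (x + μ) ^ 2 := sq_nonneg _
    have h2 : 0 ≤ x ^ 2 := sq_nonneg _
    have h3 : 0 ≤ μ ^ 2 := sq_nonneg _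
    unfold Q; nlinarith
  exact mul_pos (c_pos μ) (div_pos hnum hs)

lemma strictMono_eta (μ : ℝ) : StrictMono (etaFun μ) := by
  apply strictMono_of_deriv_pos
  intro x
  rw [(hasDerivAt_eta μ x).deriv]
  exact deriv_pos μ x

lemma contDiff_eta (μ : ℝ) : ContDiff ℝ (⊤ : ℕ∞) (etaFun μ) := by
  rw [contDiff_iff_contDiffAt]
  intro x
  have hQ : ContDiff ℝ (⊤ : ℕ∞) (fun ξ : ℝ => Q μ ξ) := by
    unfold Q; fun_prop
  have hs : ContDiffAt ℝ (⊤ : ℕ∞) (fun ξ => Real.sqrt (Q μ ξ)) x :=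
    (Real.contDiffAt_sqrt (Q_pos μ x).ne').comp x hQ.contDiffAt
  have : ContDiffAt ℝ (⊤ : ℕ∞) (fun ξ => μ + c μ * (ξ - μ) * Real.sqrt (Q μ ξ)) x := by
    exact (contDiffAt_const.add ((contDiffAt_const.mul
      (contDiffAt_id.sub contDiffAt_const)).mul hs))
  exact this

lemma continuous_eta (μ : ℝ) : Continuous (etaFun μ) :=
  (contDiff_eta μ).continuous

lemma lower_bound (μ ξ : ℝ) (h : μ ≤ ξ) :
    μ + c μ * Real.sqrt 2 * (ξ - μ) ≤ etaFun μ ξ := by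
  rw [eta_eq]
  have h2 : Real.sqrt 2 ≤ Real.sqrt (Q μ ξ) := Real.sqrt_le_sqrt (Q_ge μ ξ)
  have hc := (c_pos μ).le
  nlinarith [mul_le_mul_of_nonneg_left h2 (mul_nonneg hc (sub_nonneg.2 h))]

lemma upper_bound (μ ξ : ℝ) (h : ξ ≤ μ) :
    etaFun μ ξ ≤ μ + c μ * Real.sqrt 2 * (ξ - μ) := by
  rw [eta_eq]
  have h2 : Real.sqrt 2 ≤ Real.sqrt (Q μ ξ) := Real.sqrt_le_sqrt (Q_ge μ ξ)
  have hc := (c_pos μ).le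
  have hneg : ξ - μ ≤ 0 := sub_nonpos.2 h
  nlinarith [mul_le_mul_of_nonneg_left h2 hc]

lemma tendsto_lin (μ : ℝ) :
    Filter.Tendsto (fun ξ => μ + c μ * Real.sqrt 2 * (ξ - μ)) Filter.atTop Filter.atTop := by
  have hk : 0 < c μ * Real.sqrt 2 := mul_pos (c_pos μ) (by positivity)
  apply Filter.tendsto_atTop_add_const_left
  exact (Filter.tendsto_atTop_add_const_right _ (-μ) Filter.tendsto_id).const_mul_atTop hk

lemma tendsto_lin_bot (μ : ℝ) :
    Filter.Tendsto (fun ξ => μ + c μ * Real.sqrt 2 * (ξ - μ)) Filter.atBot Filter.atBot := by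
  have hk : 0 < c μ * Real.sqrt 2 := mul_pos (c_pos μ) (by positivity)
  apply Filter.tendsto_atBot_add_const_left
  exact (Filter.tendsto_atBot_add_const_right _ (-μ) Filter.tendsto_id).const_mul_atBot hk

lemma surj_eta (μ : ℝ) : Function.Surjective (etaFun μ) := by
  apply (continuous_eta μ).surjective
  · exact Filter.tendsto_atTop_mono' _
      (Filter.eventually_atTop.2 ⟨μ, fun ξ h => lower_bound μ ξ h⟩) (tendsto_lin μ)
  · exact Filter.tendsto_atBot_mono' _
      (Filter.eventually_atBot.2 ⟨μ, fun ξ h => upper_bound μ ξ h⟩) (tendsto_lin_bot μ)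

end EtaAux

theorem stmt4 (μ : ℝ) :
    StrictMono (etaFun μ) ∧ ContDiff ℝ (⊤ : ℕ∞) (etaFun μ) ∧ Function.Bijective (etaFun μ) ∧
    etaFun μ μ = μ ∧ deriv (etaFun μ) μ = 1 := by
  refine ⟨EtaAux.strictMono_eta μ, EtaAux.contDiff_eta μ,
    ⟨(EtaAux.strictMono_eta μ).injective, EtaAux.surj_eta μ⟩, by simp [etaFun], ?_⟩
  rw [(EtaAux.hasDerivAt_eta μ μ).deriv]
  have hQμ : EtaAux.Q μ μ = 2 * (3 * μ ^ 2 + 1) := by unfold EtaAux.Q; ring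
  rw [hQμ]
  have h1 : (0:ℝ) < 3 * μ ^ 2 + 1 := by positivity
  rw [Real.sqrt_mul (by norm_num : (0:ℝ) ≤ 2)]
  have h2 : Real.sqrt 2 ≠ 0 := by positivity
  have h3 : Real.sqrt (3 * μ ^ 2 + 1) ≠ 0 := by positivity
  unfold EtaAux.c
  field_simp
  ring
end

section
/- Let $\mu\in\mathbb{R}$ and define $G(\mu,\xi) = \frac{1}{\xi^2 + \mu\xi + \mu^2 + 1}$. Then $G$ is well-defined (the denominator is strictly positive for all real $\xi$) and for $j = 0, 1, 2$ there exists a constant $C > 0$ independent of $\mu$ and $\xi$ such that $|\partial_\xi^j G(\mu,\xi)| \leq C\langle\mu\rangle^{-j-2}$, where $\langle\mu\rangle = \sqrt{1+\mu^2}$. -/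
/-!
Write `d = ξ² + μξ + μ² + 1`. Completing squares gives `1 + μ² ≤ 2d` and `(2ξ + μ)² ≤ 4d`.
Since `G' = -(2ξ + μ)/d²` and `G'' = (2(2ξ + μ)² - 2d)/d³`, these give
`|∂ʲG| ≤ 6 (√d)^{-(j+2)}`, and `⟨μ⟩ ≤ √2 √d` turns this into the bound `24 ⟨μ⟩^{-j-2}`.
-/

open Real

/-- `∂_ξ S(μ, ξ) = (ξ - μ) * den μ ξ`. -/
def den (μ ξ : ℝ) : ℝ := ξ ^ 2 + μ * ξ + μ ^ 2 + 1

lemma one_add_sq_le_two_mul_den (μ ξ : ℝ) : 1 + μ ^ 2 ≤ 2 * den μ ξ := by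
  unfold den; nlinarith [sq_nonneg (2 * ξ + μ)]

lemma den_pos (μ ξ : ℝ) : 0 < den μ ξ := by
  nlinarith [one_add_sq_le_two_mul_den μ ξ, sq_nonneg μ]

lemma sq_two_mul_add_le (μ ξ : ℝ) : (2 * ξ + μ) ^ 2 ≤ 4 * den μ ξ := by
  unfold den; nlinarith [sq_nonneg μ]

lemma abs_two_mul_add_le (μ ξ : ℝ) : |2 * ξ + μ| ≤ 2 * √(den μ ξ) := by
  refine abs_le_of_sq_le_sq ?_ (by positivity)
  rw [mul_pow, sq_sqrt (den_pos μ ξ).le]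
  linarith [sq_two_mul_add_le μ ξ]

lemma hasDerivAt_den (μ ξ : ℝ) : HasDerivAt (den μ) (2 * ξ + μ) ξ :=
  ((((hasDerivAt_pow 2 ξ).add ((hasDerivAt_id' ξ).const_mul μ)).add_const (μ ^ 2)).add_const
    1).congr_deriv (by norm_num)

lemma hasDerivAt_one_div_den (μ ξ : ℝ) :
    HasDerivAt (fun ξ => 1 / den μ ξ) (-(2 * ξ + μ) / den μ ξ ^ 2) ξ :=
  ((hasDerivAt_const ξ (1 : ℝ)).div (hasDerivAt_den μ ξ) (den_pos μ ξ).ne').congr_deriv (by ring)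

lemma iteratedDeriv_two_one_div_den (μ ξ : ℝ) :
    iteratedDeriv 2 (fun ξ => 1 / den μ ξ) ξ =
      (2 * (2 * ξ + μ) ^ 2 - 2 * den μ ξ) / den μ ξ ^ 3 := by
  rw [iteratedDeriv_succ, iteratedDeriv_one,
    funext fun x => (hasDerivAt_one_div_den μ x).deriv]
  have hnum : HasDerivAt (fun x : ℝ => -(2 * x + μ)) (-2) ξ :=
    (((hasDerivAt_id' ξ).const_mul (2 : ℝ)).add_const μ).neg.congr_deriv (by ring)
  have hd := den_pos μ ξ
  refine (hnum.div ((hasDerivAt_den μ ξ).pow 2) (pow_ne_zero 2 hd.ne')).deriv.trans ?_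
  simp only [Pi.pow_apply]
  field_simp
  ring

lemma abs_iteratedDeriv_one_div_den_le (μ ξ : ℝ) {j : ℕ} (hj : j ≤ 2) :
    |iteratedDeriv j (fun ξ => 1 / den μ ξ) ξ| ≤ 6 / √(den μ ξ) ^ (j + 2) := by
  have hd := den_pos μ ξ
  have hrd : √(den μ ξ) ^ 2 = den μ ξ := sq_sqrt hd.le
  interval_cases j
  · rw [iteratedDeriv_zero, zero_add, hrd, abs_of_pos (one_div_pos.2 hd)]
    gcongr; norm_num
  · rw [iteratedDeriv_one, (hasDerivAt_one_div_den μ ξ).deriv, abs_div, abs_neg,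
      abs_of_pos (pow_pos hd 2)]
    calc |2 * ξ + μ| / den μ ξ ^ 2 ≤ 2 * √(den μ ξ) / (√(den μ ξ) ^ 2) ^ 2 := by
          rw [hrd]; gcongr; exact abs_two_mul_add_le μ ξ
      _ = 2 / √(den μ ξ) ^ 3 := by field_simp
      _ ≤ 6 / √(den μ ξ) ^ (1 + 2) := by gcongr; norm_num
  · rw [iteratedDeriv_two_one_div_den, abs_div, abs_of_pos (pow_pos hd 3)]
    calc |2 * (2 * ξ + μ) ^ 2 - 2 * den μ ξ| / den μ ξ ^ 3 ≤ 6 * den μ ξ / den μ ξ ^ 3 := by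
          gcongr
          exact abs_le.2
            ⟨by nlinarith [sq_nonneg (2 * ξ + μ)], by linarith [sq_two_mul_add_le μ ξ]⟩
      _ = 6 / √(den μ ξ) ^ (2 + 2) := by rw [show 2 + 2 = 2 * 2 from rfl, pow_mul, hrd]; field_simp

theorem stmt5 :
    (∀ μ ξ : ℝ, 0 < ξ ^ 2 + μ * ξ + μ ^ 2 + 1) ∧
    ∃ C > (0 : ℝ), ∀ μ ξ : ℝ, ∀ j : ℕ, j ≤ 2 →
      |iteratedDeriv j (fun ξ : ℝ => 1 / (ξ ^ 2 + μ * ξ + μ ^ 2 + 1)) ξ| ≤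
        C * Real.sqrt (1 + μ ^ 2) ^ (-(j : ℝ) - 2) := by
  refine ⟨den_pos, 24, by norm_num, fun μ ξ j hj => ?_⟩
  set s := √(1 + μ ^ 2)
  set r := √(den μ ξ)
  have hs : 0 < s := sqrt_pos.2 (by positivity)
  have hr : 0 < r := sqrt_pos.2 (den_pos μ ξ)
  have hsr : s ≤ √2 * r := by
    rw [← sqrt_mul zero_le_two]; exact sqrt_le_sqrt (one_add_sq_le_two_mul_den μ ξ)
  have hsqrt2 : √2 ^ (j + 2) ≤ 4 := calc
    √2 ^ (j + 2) ≤ √2 ^ (2 * 2) := pow_le_pow_right₀ (one_le_sqrt.2 one_le_two) (by omega)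
    _ = 4 := by rw [pow_mul, sq_sqrt zero_le_two]; norm_num
  have hrpow : s ^ (-(j : ℝ) - 2) = 1 / s ^ (j + 2) := by
    rw [show -(j : ℝ) - 2 = -((j + 2 : ℕ) : ℝ) by push_cast; ring, rpow_neg hs.le, rpow_natCast,
      one_div]
  calc _ ≤ 6 / r ^ (j + 2) := abs_iteratedDeriv_one_div_den_le μ ξ hj
    _ ≤ 24 / s ^ (j + 2) := by
      rw [div_le_div_iff₀ (by positivity) (by positivity)]
      calc 6 * s ^ (j + 2) ≤ 6 * (√2 ^ (j + 2) * r ^ (j + 2)) := by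
            rw [← mul_pow]; gcongr
        _ ≤ 24 * r ^ (j + 2) := by nlinarith [pow_pos hr (j + 2)]
    _ = 24 * s ^ (-(j : ℝ) - 2) := by rw [hrpow]; ring
end
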